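/- Let d ≥ 1, ε > 0, λ ∈ ℝ, let the components of A : ℝ^d → ℝ^d be of class C^∞_pol, and let χ : ℝ^d → ℝ be of class C^∞_pol. Then magnetic Weyl quantization is gauge-covariant: for every f ∈ S(ℝ^{2d}), every φ ∈ S(ℝ^d) and every x ∈ ℝ^d, (Op^{A + ε∇χ}_{ε,λ}(f)φ)(x) = e^{iλχ(εx)} ( Op^A_{ε,λ}(f)( w ↦ e^{−iλχ(εw)} φ(w) ) )(x), where both sides are given by absolutely convergent integrals. -/

import Mathlib

noncomputable section
open MeasureTheory Complex

/-- `ℝ^d` -/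
abbrev Vd (d : ℕ) := Fin d → ℝ

/-- Euclidean dot product. -/
def dotR {d : ℕ} (x y : Vd d) : ℝ := ∑ l, x l * y l

/-- Circulation `Γ^A([u,v]) = Σ_l (v_l - u_l) ∫_0^1 A_l(u + s(v-u)) ds`. -/
def circA {d : ℕ} (A : Vd d → Vd d) (u v : Vd d) : ℝ :=
  ∑ l, (v l - u l) * ∫ s in (0:ℝ)..1, A (u + s • (v - u)) l

/-- The `ε`-scaled circulation `Γ^A_ε([u,v]) := (1/ε) Γ^A([εu,εv])`. -/
def circAe {d : ℕ} (ε : ℝ) (A : Vd d → Vd d) (u v : Vd d) : ℝ :=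
  ε⁻¹ * circA A (ε • u) (ε • v)

/-- A function is of class `C^∞_pol` if it is smooth and it together with all its
derivatives is polynomially bounded. -/
def CPol {E F : Type*} [NormedAddCommGroup E] [NormedSpace ℝ E]
    [NormedAddCommGroup F] [NormedSpace ℝ F] (f : E → F) : Prop :=
  ContDiff ℝ (⊤ : ℕ∞) f ∧
    ∀ n : ℕ, ∃ (C : ℝ) (k : ℕ), ∀ x, ‖iteratedFDeriv ℝ n f x‖ ≤ C * (1 + ‖x‖) ^ k

/-- Magnetic Weyl quantization in the adiabatic scaling:
`(Op^A_{ε,λ}(f)φ)(x) = (2π)^{-d} ∫∫ e^{-i(y-x)·η} e^{-iλΓ^A_ε([x,y])} f((ε/2)(x+y),η) φ(y) dy dη`. -/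
def mOp {d : ℕ} (ε lam : ℝ) (A : Vd d → Vd d) (f : Vd d × Vd d → ℂ)
    (φ : Vd d → ℂ) (x : Vd d) : ℂ :=
  (((2 * Real.pi) ^ d)⁻¹ : ℝ) * ∫ y : Vd d, ∫ η : Vd d,
    Complex.exp (-Complex.I * dotR (y - x) η) *
      Complex.exp (-Complex.I * lam * circAe ε A x y) *
      f ((ε / 2) • (x + y), η) * φ y

/-- The magnetic Wigner transform `W^A_{ε,λ}(φ,ψ)`. -/
def mWig {d : ℕ} (ε lam : ℝ) (A : Vd d → Vd d) (φ ψ : Vd d → ℂ)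
    (X : Vd d × Vd d) : ℂ :=
  ∫ y : Vd d,
    Complex.exp (-Complex.I * dotR y X.2) *
      Complex.exp (-Complex.I * lam *
        circAe ε A (ε⁻¹ • X.1 - (2:ℝ)⁻¹ • y) (ε⁻¹ • X.1 + (2:ℝ)⁻¹ • y)) *
      (starRingEnd ℂ) (φ (ε⁻¹ • X.1 - (2:ℝ)⁻¹ • y)) * ψ (ε⁻¹ • X.1 + (2:ℝ)⁻¹ • y)

/-! By the fundamental theorem of calculus along the segment, the circulation of `ε∇χ` over
`[εx, εy]` is `ε (χ(εy) - χ(εx))`; since the circulation is linear in the field,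
`Γ^{A+ε∇χ}_ε([x,y]) = Γ^A_ε([x,y]) + χ(εy) - χ(εx)`, and the integral kernel of
`Op^{A+ε∇χ}_{ε,λ}(f)` factors pointwise as
`e^{iλχ(εx)} · (kernel of Op^A_{ε,λ}(f)) · e^{-iλχ(εy)}`.
The integrals converge absolutely because the phases are unimodular, `φ` is bounded, and `f`
composed with the invertible affine map `(y, η) ↦ ((ε/2)(x + y), η)` is again Schwartz. -/

/-- The coordinate gradient: Mathlib's `gradient` needs an inner product space, which the
sup-normed `Fin d → ℝ` is not. -/
def grad {d : ℕ} (χ : Vd d → ℝ) (w : Vd d) : Vd d := fun l => fderiv ℝ χ w (Pi.single l 1)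

section Circulation

variable {d : ℕ}

lemma continuous_grad {χ : Vd d → ℝ} (hχ : ContDiff ℝ 1 χ) : Continuous (grad χ) :=
  continuous_pi fun _ => (hχ.continuous_fderiv one_ne_zero).clm_apply continuous_const

lemma continuous_circA_right {A : Vd d → Vd d} (hA : Continuous A) (u : Vd d) :
    Continuous fun v => circA A u v := by
  refine continuous_finsetSum _ fun l _ => ((continuous_apply l).sub continuous_const).mul ?_
  exact intervalIntegral.continuous_parametric_intervalIntegral_of_continuous'
    (f := fun v s => A (u + s • (v - u)) l)
    ((continuous_apply l).comp (hA.comp (by fun_prop))) 0 1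

lemma circA_add {A B : Vd d → Vd d} (hA : Continuous A) (hB : Continuous B) (u v : Vd d) :
    circA (A + B) u v = circA A u v + circA B u v := by
  simp only [circA, ← Finset.sum_add_distrib, ← mul_add]
  refine Finset.sum_congr rfl fun l _ => congrArg _ ?_
  exact intervalIntegral.integral_add
    (((continuous_apply l).comp (hA.comp (by fun_prop))).intervalIntegrable 0 1)
    (((continuous_apply l).comp (hB.comp (by fun_prop))).intervalIntegrable 0 1)

lemma circA_smul (c : ℝ) (A : Vd d → Vd d) (u v : Vd d) :
    circA (c • A) u v = c * circA A u v := by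
  simp only [circA, Finset.mul_sum, Pi.smul_apply, smul_eq_mul,
    intervalIntegral.integral_const_mul]
  exact Finset.sum_congr rfl fun _ _ => by ring

lemma circA_grad {χ : Vd d → ℝ} (hχ : ContDiff ℝ 1 χ) (u v : Vd d) :
    circA (grad χ) u v = χ v - χ u := by
  have hpath (s : ℝ) : HasDerivAt (fun s : ℝ => u + s • (v - u)) (v - u) s := by
    simpa using ((hasDerivAt_id s).smul_const (v - u)).const_add u
  have hderiv (s : ℝ) : HasDerivAt (fun s : ℝ => χ (u + s • (v - u)))
      (fderiv ℝ χ (u + s • (v - u)) (v - u)) s :=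
    ((hχ.differentiable one_ne_zero) _).hasFDerivAt.comp_hasDerivAt s (hpath s)
  have hcont : Continuous fun s : ℝ => fderiv ℝ χ (u + s • (v - u)) :=
    (hχ.continuous_fderiv one_ne_zero).comp (by fun_prop)
  have hint (l : Fin d) :
      IntervalIntegrable (fun s => (v l - u l) * grad χ (u + s • (v - u)) l) volume 0 1 :=
    (continuous_const.mul (hcont.clm_apply continuous_const)).intervalIntegrable 0 1
  have hdir (s : ℝ) : fderiv ℝ χ (u + s • (v - u)) (v - u)
      = ∑ l, (v l - u l) * grad χ (u + s • (v - u)) l := by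
    conv_lhs => enter [2]; rw [← Finset.univ_sum_single (v - u)]
    refine (map_sum _ _ _).trans (Finset.sum_congr rfl fun l _ => ?_)
    rw [grad, ← smul_eq_mul (v l - u l), ← map_smul, ← Pi.single_smul', smul_eq_mul, mul_one,
      Pi.sub_apply]
  calc circA (grad χ) u v
      = ∫ s in (0:ℝ)..1, ∑ l, (v l - u l) * grad χ (u + s • (v - u)) l := by
        rw [intervalIntegral.integral_finsetSum fun l _ => hint l]
        simp only [circA, intervalIntegral.integral_const_mul]
    _ = ∫ s in (0:ℝ)..1, fderiv ℝ χ (u + s • (v - u)) (v - u) := by simp only [hdir]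
    _ = χ v - χ u := by
        rw [intervalIntegral.integral_eq_sub_of_hasDerivAt (fun s _ => hderiv s)
          ((hcont.clm_apply continuous_const).intervalIntegrable 0 1)]
        simp

lemma circAe_add_smul_grad {ε : ℝ} (hε : ε ≠ 0) {A : Vd d → Vd d} (hA : Continuous A)
    {χ : Vd d → ℝ} (hχ : ContDiff ℝ 1 χ) (u v : Vd d) :
    circAe ε (A + ε • grad χ) u v = circAe ε A u v + (χ (ε • v) - χ (ε • u)) := by
  rw [circAe, circA_add hA ((continuous_grad hχ).const_smul ε), circA_smul,
    circA_grad hχ, mul_add, inv_mul_cancel_left₀ hε, circAe]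

end Circulation

def weylKernel {d : ℕ} (ε lam : ℝ) (A : Vd d → Vd d) (f : Vd d × Vd d → ℂ) (x : Vd d)
    (p : Vd d × Vd d) : ℂ :=
  Complex.exp (-Complex.I * dotR (p.1 - x) p.2) *
    Complex.exp (-Complex.I * lam * circAe ε A x p.1) * f ((ε / 2) • (x + p.1), p.2)

section WeylKernel

variable {d : ℕ}

lemma continuous_dotR : Continuous fun p : Vd d × Vd d => dotR p.1 p.2 :=
  continuous_finsetSum _ fun l _ => by fun_prop

lemma integrable_schwartzMap_comp_scaledMidpoint {ε : ℝ} (hε : ε ≠ 0)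
    (f : SchwartzMap (Vd d × Vd d) ℂ) (x : Vd d) :
    Integrable fun p : Vd d × Vd d => f ((ε / 2) • (x + p.1), p.2) := by
  let L : (Vd d × Vd d) ≃L[ℝ] (Vd d × Vd d) :=
    ((LinearEquiv.smulOfNeZero ℝ (Vd d) (ε / 2) (div_ne_zero hε two_ne_zero)).prodCongr
      (LinearEquiv.refl ℝ (Vd d))).toContinuousLinearEquiv
  let g := SchwartzMap.compSubConstCLM ℝ (-(x, 0))
    (SchwartzMap.compCLMOfContinuousLinearEquiv ℝ L f)
  -- instance search does not see through `volume` on a product type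
  have : (volume : Measure (Vd d × Vd d)).IsAddHaarMeasure := Measure.prod.instIsAddHaarMeasure _ _
  convert g.integrable (μ := volume) using 2 with p
  simp [g, L, add_comm]

lemma integrable_weylKernel_mul {ε : ℝ} (hε : ε ≠ 0) (lam : ℝ) {A : Vd d → Vd d}
    (hA : Continuous A) (f : SchwartzMap (Vd d × Vd d) ℂ) (x : Vd d) {ψ : Vd d → ℂ}
    (hψ : Continuous ψ) {C : ℝ} (hψC : ∀ y, ‖ψ y‖ ≤ C) :
    Integrable fun p : Vd d × Vd d => weylKernel ε lam A f x p * ψ p.1 := by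
  have hphase : Continuous fun p : Vd d × Vd d => circAe ε A x p.1 :=
    continuous_const.mul ((continuous_circA_right hA _).comp (continuous_fst.const_smul ε))
  have hdot : Continuous fun p : Vd d × Vd d => dotR (p.1 - x) p.2 :=
    continuous_dotR.comp ((continuous_fst.sub continuous_const).prodMk continuous_snd)
  have hbdd := (integrable_schwartzMap_comp_scaledMidpoint hε f x).bdd_mul (c := C)
    (f := fun p : Vd d × Vd d => Complex.exp (-Complex.I * dotR (p.1 - x) p.2) *
      Complex.exp (-Complex.I * lam * circAe ε A x p.1) * ψ p.1)
    (Continuous.aestronglyMeasurable (by fun_prop))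
    (.of_forall fun p => by simpa [Complex.norm_exp] using hψC p.1)
  refine hbdd.congr (.of_forall fun p => ?_)
  simp only [weylKernel]
  ring

lemma weylKernel_add_smul_grad {ε : ℝ} (hε : ε ≠ 0) (lam : ℝ) {A : Vd d → Vd d}
    (hA : Continuous A) {χ : Vd d → ℝ} (hχ : ContDiff ℝ 1 χ) (f : Vd d × Vd d → ℂ)
    (x : Vd d) (p : Vd d × Vd d) :
    weylKernel ε lam (A + ε • grad χ) f x p
      = Complex.exp (Complex.I * lam * χ (ε • x)) * weylKernel ε lam A f x p *
        Complex.exp (-Complex.I * lam * χ (ε • p.1)) := by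
  simp only [weylKernel, circAe_add_smul_grad hε hA hχ, Complex.ofReal_add, Complex.ofReal_sub]
  rw [show -Complex.I * lam * (circAe ε A x p.1 + (χ (ε • p.1) - χ (ε • x)))
      = Complex.I * lam * χ (ε • x) + -Complex.I * lam * circAe ε A x p.1
        + -Complex.I * lam * χ (ε • p.1) by ring, Complex.exp_add, Complex.exp_add]
  ring

lemma mOp_eq_integral_weylKernel (ε lam : ℝ) (A : Vd d → Vd d) (f : Vd d × Vd d → ℂ)
    (φ : Vd d → ℂ) (x : Vd d) :
    mOp ε lam A f φ x = (((2 * Real.pi) ^ d)⁻¹ : ℝ) *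
      ∫ y : Vd d, ∫ η : Vd d, weylKernel ε lam A f x (y, η) * φ y :=
  rfl

lemma mOp_add_smul_grad {ε : ℝ} (hε : ε ≠ 0) (lam : ℝ) {A : Vd d → Vd d} (hA : Continuous A)
    {χ : Vd d → ℝ} (hχ : ContDiff ℝ 1 χ) (f : Vd d × Vd d → ℂ) (φ : Vd d → ℂ) (x : Vd d) :
    mOp ε lam (A + ε • grad χ) f φ x = Complex.exp (Complex.I * lam * χ (ε • x)) *
      mOp ε lam A f (fun w => Complex.exp (-Complex.I * lam * χ (ε • w)) * φ w) x := by
  simp only [mOp_eq_integral_weylKernel, weylKernel_add_smul_grad hε lam hA hχ, mul_assoc,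
    integral_const_mul]
  ring

end WeylKernel

theorem statement3_general (d : ℕ) (ε : ℝ) (hε : 0 < ε) (lam : ℝ)
    (A : Vd d → Vd d) (hA : ∀ l, CPol fun x : Vd d => A x l)
    (χ : Vd d → ℝ) (hχ : CPol χ)
    (f : SchwartzMap (Vd d × Vd d) ℂ) (φ : SchwartzMap (Vd d) ℂ) (x : Vd d) :
    Integrable (fun p : Vd d × Vd d =>
        Complex.exp (-Complex.I * dotR (p.1 - x) p.2) *
          Complex.exp (-Complex.I * lam *
            circAe ε (fun w => A w + ε • (fun l => fderiv ℝ χ w (Pi.single l 1))) x p.1) *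
          f ((ε / 2) • (x + p.1), p.2) * φ p.1) ∧
    Integrable (fun p : Vd d × Vd d =>
        Complex.exp (-Complex.I * dotR (p.1 - x) p.2) *
          Complex.exp (-Complex.I * lam * circAe ε A x p.1) *
          f ((ε / 2) • (x + p.1), p.2) *
          (Complex.exp (-Complex.I * lam * χ (ε • p.1)) * φ p.1)) ∧
    mOp ε lam (fun w => A w + ε • (fun l => fderiv ℝ χ w (Pi.single l 1))) (⇑f) (⇑φ) x
      = Complex.exp (Complex.I * lam * χ (ε • x)) *
        mOp ε lam A (⇑f) (fun w => Complex.exp (-Complex.I * lam * χ (ε • w)) * φ w) x := by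
  have hε₀ : ε ≠ 0 := hε.ne'
  have hAc : Continuous A := continuous_pi fun l => (hA l).1.continuous
  have hχ₁ : ContDiff ℝ 1 χ := hχ.1.of_le (by exact_mod_cast le_top)
  obtain ⟨C, hC⟩ := φ.decay 0 0
  have hφC (y : Vd d) : ‖φ y‖ ≤ C := by simpa using hC.2 y
  have hgauged (y : Vd d) :
      ‖Complex.exp (-Complex.I * lam * χ (ε • y)) * φ y‖ ≤ C := by
    simpa [Complex.norm_exp] using hφC y
  exact ⟨integrable_weylKernel_mul hε₀ lam
      (hAc.add ((continuous_grad hχ₁).const_smul ε)) f x φ.continuous hφC,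
    integrable_weylKernel_mul hε₀ lam hAc f x (by fun_prop) hgauged,
    mOp_add_smul_grad hε₀ lam hAc hχ₁ f φ x⟩

/-- Gauge covariance of magnetic Weyl quantization:
`Op^{A+ε∇χ}_{ε,λ}(f) = e^{iλχ(εx̂)} Op^A_{ε,λ}(f) e^{-iλχ(εx̂)}`,
both sides being given by absolutely convergent integrals. -/
theorem statement3 (d : ℕ) (hd : 1 ≤ d) (ε : ℝ) (hε : 0 < ε) (lam : ℝ)
    (A : Vd d → Vd d) (hA : ∀ l, CPol fun x : Vd d => A x l)
    (χ : Vd d → ℝ) (hχ : CPol χ)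
    (f : SchwartzMap (Vd d × Vd d) ℂ) (φ : SchwartzMap (Vd d) ℂ) (x : Vd d) :
    Integrable (fun p : Vd d × Vd d =>
        Complex.exp (-Complex.I * dotR (p.1 - x) p.2) *
          Complex.exp (-Complex.I * lam *
            circAe ε (fun w => A w + ε • (fun l => fderiv ℝ χ w (Pi.single l 1))) x p.1) *
          f ((ε / 2) • (x + p.1), p.2) * φ p.1) ∧
    Integrable (fun p : Vd d × Vd d =>
        Complex.exp (-Complex.I * dotR (p.1 - x) p.2) *
          Complex.exp (-Complex.I * lam * circAe ε A x p.1) *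
          f ((ε / 2) • (x + p.1), p.2) *
          (Complex.exp (-Complex.I * lam * χ (ε • p.1)) * φ p.1)) ∧
    mOp ε lam (fun w => A w + ε • (fun l => fderiv ℝ χ w (Pi.single l 1))) (⇑f) (⇑φ) x
      = Complex.exp (Complex.I * lam * χ (ε • x)) *
        mOp ε lam A (⇑f) (fun w => Complex.exp (-Complex.I * lam * χ (ε • w)) * φ w) x :=
  statement3_general d ε hε lam A hA χ hχ f φ x
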